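/- The numbers P(K_n = k) = C(2n-k-1, n-1) · 2^{k+1-2n} for 1 ≤ k ≤ n define a probability distribution on {1,...,n} (they sum to 1), and they satisfy the forward recursion P(K_{n+1} = k) = ((2n-k)/(2n)) P(K_n = k) + ((k-1)/(2n)) P(K_n = k-1), corresponding to the Markov chain with transitions P(K_{n+1}=k | K_n=k) = (2n-k)/(2n) and P(K_{n+1}=k+1 | K_n=k) = k/(2n), started from K_1 = 1. -/

import Mathlib

open Finset

/-- `q n k = C(2n-k-1, n-1) 2^{k+1-2n}` for `1 ≤ k ≤ n`, and `0` otherwise. -/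
noncomputable def blockCountDist (n k : ℕ) : ℝ :=
  if 1 ≤ k ∧ k ≤ n then (Nat.choose (2 * n - k - 1) (n - 1) : ℝ) * (2 : ℝ) ^ ((k : ℤ) + 1 - 2 * n)
  else 0

/-!
In the coordinates `d = n - k`, `j = k - 1` (which remove every truncated subtraction) the
distribution reads `q (d + j + 1) (j + 1) = C(2d + j, d) / 2 ^ (2d + j)`, and the forward equation
becomes a three-term binomial identity that follows from Pascal's rule and absorption. Summing the
forward equation preserves total mass, because each state `k` splits its mass between staying and
moving up with weights `(2n - k)/(2n) + k/(2n) = 1`; induction from `q 1 1 = 1` gives the sum.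
-/

theorem Finset.sum_Icc_succ_eq_of_forward_eq {R : Type*} [Semiring R] {p p' stay move : ℕ → R}
    {n : ℕ} (hp_zero : p 0 = 0) (hp_top : p (n + 1) = 0) (hstoch : ∀ k, stay k + move k = 1)
    (hp' : ∀ k ∈ Icc 1 (n + 1), p' k = stay k * p k + move (k - 1) * p (k - 1)) :
    ∑ k ∈ Icc 1 (n + 1), p' k = ∑ k ∈ Icc 1 n, p k := by
  have hshift : ∑ k ∈ Icc 1 (n + 1), move (k - 1) * p (k - 1) = ∑ k ∈ Icc 1 n, move k * p k := by
    rw [← zero_add 1, ← map_add_right_Icc, sum_map, ← add_sum_Ioc_eq_sum_Icc n.zero_le]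
    simp [hp_zero, ← Icc_add_one_left_eq_Ioc]
  rw [sum_congr rfl hp', sum_add_distrib, sum_Icc_succ_top (by omega), hp_top, mul_zero,
    add_zero, hshift, ← sum_add_distrib]
  simp only [← add_mul, hstoch, one_mul]

theorem Nat.add_add_one_mul_choose_two_mul_add_two (d j : ℕ) :
    (d + j + 1) * (2 * d + j + 2).choose (d + 1)
      = 2 * (2 * d + j + 1) * (2 * d + j).choose d + j * (2 * d + j + 1).choose (d + 1) := by
  have hpascal := Nat.choose_succ_succ' (2 * d + j + 1) d
  have habsorb := Nat.add_one_mul_choose_eq (2 * d + j) d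
  have hratio := Nat.choose_succ_right_eq (2 * d + j + 1) d
  rw [show 2 * d + j + 1 - d = d + j + 1 by omega] at hratio
  zify at hpascal habsorb hratio ⊢
  linear_combination (d + j + 1 : ℤ) * hpascal - hratio - 2 * habsorb

theorem blockCountDist_add_add_one (d j : ℕ) :
    blockCountDist (d + j + 1) (j + 1) = (2 * d + j).choose d / 2 ^ (2 * d + j) := by
  have hexp : ((j + 1 : ℕ) : ℤ) + 1 - 2 * (d + j + 1 : ℕ) = -(2 * d + j : ℕ) := by push_cast; ring
  rw [blockCountDist, if_pos ⟨by omega, by omega⟩, hexp, zpow_neg, zpow_natCast,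
    show 2 * (d + j + 1) - (j + 1) - 1 = (d + j) + d by omega, show d + j + 1 - 1 = d + j from rfl,
    Nat.choose_symm_add, show d + j + d = 2 * d + j by ring, div_eq_mul_inv]

theorem blockCountDist_self (n : ℕ) : blockCountDist (n + 1) (n + 1) = 1 / 2 ^ n := by
  simpa using blockCountDist_add_add_one 0 n

theorem blockCountDist_eq_zero_of_lt (n : ℕ) {k : ℕ} (hk : n < k) : blockCountDist n k = 0 := by
  rw [blockCountDist, if_neg (by omega)]

theorem blockCountDist_zero_right (n : ℕ) : blockCountDist n 0 = 0 := by
  rw [blockCountDist, if_neg (by omega)]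

theorem natCast_mul_blockCountDist_add_add_one (d j : ℕ) :
    (j : ℝ) * blockCountDist (d + j + 1) j
      = j * (2 * d + j + 1).choose (d + 1) / 2 ^ (2 * d + j + 1) := by
  rcases j with _ | j
  · simp
  · rw [show d + (j + 1) + 1 = (d + 1) + j + 1 by ring, blockCountDist_add_add_one,
      show 2 * (d + 1) + j = 2 * d + (j + 1) + 1 by ring, mul_div_assoc]

theorem blockCountDist_succ_add_add_one (d j : ℕ) :
    blockCountDist (d + j + 2) (j + 1)
      = (2 * d + j + 1) / (2 * (d + j + 1)) * blockCountDist (d + j + 1) (j + 1)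
        + j / (2 * (d + j + 1)) * blockCountDist (d + j + 1) j := by
  have hchoose : ((d + j + 1) * (2 * d + j + 2).choose (d + 1) : ℝ)
      = 2 * (2 * d + j + 1) * (2 * d + j).choose d + j * (2 * d + j + 1).choose (d + 1) := by
    exact_mod_cast Nat.add_add_one_mul_choose_two_mul_add_two d j
  rw [div_mul_eq_mul_div (j : ℝ), natCast_mul_blockCountDist_add_add_one,
    blockCountDist_add_add_one, show d + j + 2 = (d + 1) + j + 1 by ring,
    blockCountDist_add_add_one,
    show 2 * (d + 1) + j = 2 * d + j + 2 by ring]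
  field_simp
  linear_combination 4 * ((2 : ℝ) ^ (2 * d + j)) ^ 2 * hchoose

theorem blockCountDist_succ (n k : ℕ) (hn : 1 ≤ n) (hk : 1 ≤ k) (hkn : k ≤ n + 1) :
    blockCountDist (n + 1) k
      = ((2 * n - k : ℝ) / (2 * n)) * blockCountDist n k
        + ((k - 1 : ℝ) / (2 * n)) * blockCountDist n (k - 1) := by
  rcases hkn.lt_or_eq with hlt | rfl
  · obtain ⟨d, j, rfl, rfl⟩ : ∃ d j, n = d + j + 1 ∧ k = j + 1 := ⟨n - k, k - 1, by omega, by omega⟩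
    rw [blockCountDist_succ_add_add_one, Nat.add_sub_cancel]
    push_cast
    ring_nf
  · obtain ⟨m, rfl⟩ : ∃ m, n = m + 1 := ⟨n - 1, by omega⟩
    rw [blockCountDist_eq_zero_of_lt (m + 1) (k := m + 1 + 1) (by omega), Nat.add_sub_cancel,
      blockCountDist_self, blockCountDist_self]
    field_simp
    push_cast
    ring

theorem sum_blockCountDist (n : ℕ) (hn : 1 ≤ n) : ∑ k ∈ Icc 1 n, blockCountDist n k = 1 := by
  induction n, hn using Nat.le_induction with
  | base => simp [blockCountDist_self 0]
  | succ n hn ih =>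
    rw [← ih]
    refine sum_Icc_succ_eq_of_forward_eq (blockCountDist_zero_right n)
      (blockCountDist_eq_zero_of_lt n n.lt_succ_self) (stay := fun k => (2 * n - k : ℝ) / (2 * n))
      (move := fun k => (k : ℝ) / (2 * n)) (fun k => ?_) (fun k hk => ?_)
    · have hn0 : (n : ℝ) ≠ 0 := by positivity
      field_simp
      ring
    · obtain ⟨hk1, hkn⟩ := mem_Icc.mp hk
      rw [blockCountDist_succ n k hn hk1 hkn, Nat.cast_sub hk1, Nat.cast_one]

theorem blockCountDist_markov_chain :
    blockCountDist 1 1 = 1 ∧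
    (∀ n : ℕ, 1 ≤ n → ∑ k ∈ Finset.Icc 1 n, blockCountDist n k = 1) ∧
    (∀ n k : ℕ, 1 ≤ n → 1 ≤ k → k ≤ n + 1 →
      blockCountDist (n + 1) k
        = ((2 * n - k : ℝ) / (2 * n)) * blockCountDist n k
          + ((k - 1 : ℝ) / (2 * n)) * blockCountDist n (k - 1)) :=
  ⟨by simpa using blockCountDist_self 0, sum_blockCountDist, blockCountDist_succ⟩
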